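/- Online performance bound with representation mismatch and entropy gap (Theorem 3): let P_src and P_tar be two transition kernels on the same finite state and action spaces (same reward, discount, and initial distribution), with P_tar(s,a)(s') > 0 for all (s,a,s'). Suppose R : S × A → ℝ satisfies R(s,a) ≥ 0 and R(s,a) = D_KL( P_src(s,a) ‖ P_tar(s,a) ) + H(P_src(s,a)) − H(P_tar(s,a)) for all (s,a) (R is the per-pair representation mismatch). Then for any policy π, J[P_tar](π) − J[P_src](π) ≥ −(√2·γ·r_max/(1−γ)²) · Σ_{(s,a)} ρ[P_src,π](s,a) · √(R(s,a)) − (√2·γ·r_max/(1−γ)²) · Σ_{(s,a)} ρ[P_src,π](s,a) · √( |H(P_src(s,a)) − H(P_tar(s,a))| ). -/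

import Mathlib

open Real

noncomputable section

variable {S A : Type*} [Fintype S] [Fintype A]

/-- Time-`t` state-action distribution `d_t[P,pol]` started from the initial state
distribution `ρ0`:  `d_0(s,a) = ρ0(s)·pol(s)(a)` and
`d_{t+1}(s',a') = Σ_{(s,a)} d_t(s,a)·P(s,a)(s')·pol(s')(a')`. -/
def dDist (P : S → A → PMF S) (pol : S → PMF A) (ρ0 : PMF S) : ℕ → S × A → ℝ
  | 0 => fun p => (ρ0 p.1).toReal * (pol p.1 p.2).toReal
  | (t + 1) => fun p' =>
      ∑ p : S × A, dDist P pol ρ0 t p * (P p.1 p.2 p'.1).toReal * (pol p'.1 p'.2).toReal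

/-- Normalized state-action occupancy `ρ[P,pol](s,a) = (1−γ)·Σ_t γ^t·d_t[P,pol](s,a)`. -/
def occ (P : S → A → PMF S) (pol : S → PMF A) (ρ0 : PMF S) (γ : ℝ) (p : S × A) : ℝ :=
  (1 - γ) * ∑' t : ℕ, γ ^ t * dDist P pol ρ0 t p

/-- Normalized state occupancy `ν[P,pol](s) = Σ_a ρ[P,pol](s,a)`. -/
def stateOcc (P : S → A → PMF S) (pol : S → PMF A) (ρ0 : PMF S) (γ : ℝ) (s : S) : ℝ :=
  ∑ a : A, occ P pol ρ0 γ (s, a)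

/-- Expected discounted return `J[P](pol) = Σ_t γ^t Σ_{(s,a)} d_t[P,pol](s,a)·r(s,a)`. -/
def Jret (P : S → A → PMF S) (pol : S → PMF A) (ρ0 : PMF S) (r : S → A → ℝ) (γ : ℝ) : ℝ :=
  ∑' t : ℕ, γ ^ t * ∑ p : S × A, dDist P pol ρ0 t p * r p.1 p.2

/-- Value function `V[P,pol](s)`: the return with the recursion started from the point
distribution at `s` (i.e. `d_0(s',a) = 1[s'=s]·pol(s')(a)`). -/
def Vval (P : S → A → PMF S) (pol : S → PMF A) (r : S → A → ℝ) (γ : ℝ) (s : S) : ℝ :=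
  Jret P pol (PMF.pure s) r γ

/-- Action-value function `Q[P,pol](s,a) = r(s,a) + γ·Σ_{s'} P(s,a)(s')·V[P,pol](s')`. -/
def Qval (P : S → A → PMF S) (pol : S → PMF A) (r : S → A → ℝ) (γ : ℝ) (s : S) (a : A) : ℝ :=
  r s a + γ * ∑ s' : S, (P s a s').toReal * Vval P pol r γ s'

/-- Total variation distance between two pmfs on a finite type:
`D_TV(p,q) = (1/2)·Σ_x |p(x) − q(x)|`. -/
def dTV {X : Type*} [Fintype X] (p q : PMF X) : ℝ :=
  (1 / 2) * ∑ x : X, |(p x).toReal - (q x).toReal|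

/-- Kullback–Leibler divergence between two pmfs on a finite type (with `q` everywhere
positive): `D_KL(p‖q) = Σ_x p(x)·log(p(x)/q(x))`, with the convention `0·log 0 = 0`. -/
def dKL {X : Type*} [Fintype X] (p q : PMF X) : ℝ :=
  ∑ x : X, (p x).toReal * Real.log ((p x).toReal / (q x).toReal)

/-- Shannon entropy of a pmf on a finite type, `H(p) = −Σ_x p(x)·log p(x)`,
with the convention `0·log 0 = 0`. -/
def entropyPMF {X : Type*} [Fintype X] (p : PMF X) : ℝ :=
  - ∑ x : X, (p x).toReal * Real.log (p x).toReal

end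

private lemma hd_g {t : ℝ} (ht : 0 < t) :
    HasDerivAt (fun x : ℝ => Real.log x - 3*(x-1)*(x+5)/(2*(x+2)^2))
      (1/t - 27/(t+2)^3) t := by
  have h2 : (2*(t+2)^2 : ℝ) ≠ 0 := by positivity
  have hn : HasDerivAt (fun x : ℝ => 3*(x-1)*(x+5)) (3*((t-1)+(t+5))) t := by
    have h0 := (((hasDerivAt_id' t).sub_const (1:ℝ)).mul ((hasDerivAt_id' t).add_const 5)).const_mul (3:ℝ)
    convert h0 using 1 <;> first | rfl | (funext x; simp only [Pi.mul_apply]; ring) | (funext x; ring) | ring | (push_cast; ring)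
  have hdd : HasDerivAt (fun x : ℝ => 2*(x+2)^2) (2*(2*(t+2))) t := by
    have h0 := (((hasDerivAt_id' t).add_const (2:ℝ)).pow 2).const_mul (2:ℝ)
    convert h0 using 1 <;> first | rfl | (funext x; simp only [Pi.mul_apply]; ring) | (funext x; ring) | ring | (push_cast; ring)
  have hq := hn.div hdd h2
  have hlog := Real.hasDerivAt_log (ne_of_gt ht)
  have := hlog.sub hq
  refine this.congr_deriv ?_
  have h3 : (t+2 : ℝ) ≠ 0 := by positivity
  field_simp
  ring

private lemma hd_f {t : ℝ} (ht : 0 < t) :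
    HasDerivAt (fun x : ℝ => x * Real.log x - x + 1 - 3*(x-1)^2/(2*(x+2)))
      (Real.log t - 3*(t-1)*(t+5)/(2*(t+2)^2)) t := by
  have h2 : (2*(t+2) : ℝ) ≠ 0 := by positivity
  have hn : HasDerivAt (fun x : ℝ => 3*(x-1)^2) (3*(2*(t-1))) t := by
    have h0 := (((hasDerivAt_id' t).sub_const (1:ℝ)).pow 2).const_mul (3:ℝ)
    convert h0 using 1 <;> first | rfl | (funext x; simp only [Pi.mul_apply]; ring) | (funext x; ring) | ring | (push_cast; ring)
  have hdd : HasDerivAt (fun x : ℝ => 2*(x+2)) 2 t := by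
    have h0 := ((hasDerivAt_id' t).add_const (2:ℝ)).const_mul (2:ℝ)
    convert h0 using 1 <;> first | rfl | (funext x; simp only [Pi.mul_apply]; ring) | (funext x; ring) | ring | (push_cast; ring)
  have hq := hn.div hdd h2
  have h1 := (Real.hasDerivAt_mul_log (ne_of_gt ht)).sub (hasDerivAt_id t)
  have := (h1.add_const 1).sub hq
  refine this.congr_deriv ?_
  have h3 : (t+2 : ℝ) ≠ 0 := by positivity
  field_simp
  ring

private lemma g_nonneg {t : ℝ} (ht : 1 ≤ t) :
    0 ≤ Real.log t - 3*(t-1)*(t+5)/(2*(t+2)^2) := by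
  set g : ℝ → ℝ := fun x => Real.log x - 3*(x-1)*(x+5)/(2*(x+2)^2) with hg
  have hmono : MonotoneOn g (Set.Ici 1) := by
    apply monotoneOn_of_deriv_nonneg (convex_Ici 1)
    · intro x hx
      exact ((hd_g (lt_of_lt_of_le one_pos (by exact hx))).continuousAt).continuousWithinAt
    · intro x hx
      rw [interior_Ici] at hx
      exact (hd_g (lt_trans one_pos hx)).differentiableAt.differentiableWithinAt
    · intro x hx
      rw [interior_Ici] at hx
      have hx0 : (0:ℝ) < x := lt_trans one_pos hx
      rw [(hd_g hx0).deriv]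
      have h1 : (0:ℝ) < x := hx0
      have : 27 * x ≤ (x+2)^3 := by nlinarith [sq_nonneg (x-1), hx0.le]
      have h27 : 27/(x+2)^3 ≤ 1/x := by
        rw [div_le_div_iff₀ (by positivity) h1]
        nlinarith
      linarith
  have h1 : g 1 = 0 := by simp [hg]
  have := hmono (Set.mem_Ici.2 le_rfl) (Set.mem_Ici.2 ht) ht
  rw [h1] at this
  exact this

private lemma g_nonpos {t : ℝ} (ht0 : 0 < t) (ht : t ≤ 1) :
    Real.log t - 3*(t-1)*(t+5)/(2*(t+2)^2) ≤ 0 := by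
  set g : ℝ → ℝ := fun x => Real.log x - 3*(x-1)*(x+5)/(2*(x+2)^2) with hg
  have hmono : MonotoneOn g (Set.Icc t 1) := by
    apply monotoneOn_of_deriv_nonneg (convex_Icc t 1)
    · intro x hx
      exact ((hd_g (lt_of_lt_of_le ht0 hx.1)).continuousAt).continuousWithinAt
    · intro x hx
      rw [interior_Icc] at hx
      exact (hd_g (lt_trans ht0 hx.1)).differentiableAt.differentiableWithinAt
    · intro x hx
      rw [interior_Icc] at hx
      have hx0 : (0:ℝ) < x := lt_trans ht0 hx.1
      rw [(hd_g hx0).deriv]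
      have : 27 * x ≤ (x+2)^3 := by nlinarith [sq_nonneg (x-1), hx0.le]
      have h27 : 27/(x+2)^3 ≤ 1/x := by
        rw [div_le_div_iff₀ (by positivity) hx0]
        nlinarith
      linarith
  have h1 : g 1 = 0 := by simp [hg]
  have := hmono (Set.mem_Icc.2 ⟨le_rfl, ht⟩) (Set.mem_Icc.2 ⟨ht, le_rfl⟩) ht
  rw [h1] at this
  exact this

/-- key pointwise inequality -/
lemma key_ineq {t : ℝ} (ht : 0 ≤ t) :
    3*(t-1)^2/(2*(t+2)) ≤ t * Real.log t - t + 1 := by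
  set f : ℝ → ℝ := fun x => x * Real.log x - x + 1 - 3*(x-1)^2/(2*(x+2)) with hf
  have hf1 : f 1 = 0 := by simp [hf]
  have key : 0 ≤ f t := by
    rcases le_or_gt 1 t with h | h
    · -- monotone on [1, ∞)
      have hmono : MonotoneOn f (Set.Ici 1) := by
        apply monotoneOn_of_deriv_nonneg (convex_Ici 1)
        · intro x hx
          exact ((hd_f (lt_of_lt_of_le one_pos hx)).continuousAt).continuousWithinAt
        · intro x hx
          rw [interior_Ici] at hx
          exact (hd_f (lt_trans one_pos hx)).differentiableAt.differentiableWithinAt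
        · intro x hx
          rw [interior_Ici] at hx
          rw [(hd_f (lt_trans one_pos hx)).deriv]
          exact g_nonneg hx.le
      have := hmono (Set.mem_Ici.2 le_rfl) (Set.mem_Ici.2 h) h
      rw [hf1] at this; exact this
    · -- antitone on [0, 1]
      have hanti : AntitoneOn f (Set.Icc 0 1) := by
        apply antitoneOn_of_deriv_nonpos (convex_Icc 0 1)
        · apply ContinuousOn.sub
          · apply ContinuousOn.add
            · exact (Real.continuous_mul_log.sub continuous_id).continuousOn
            · exact continuousOn_const
          · apply ContinuousOn.div
            · fun_prop
            · fun_prop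
            · intro x hx
              have := hx.1
              positivity
        · intro x hx
          rw [interior_Icc] at hx
          exact (hd_f hx.1).differentiableAt.differentiableWithinAt
        · intro x hx
          rw [interior_Icc] at hx
          rw [(hd_f hx.1).deriv]
          exact g_nonpos hx.1 hx.2.le
      have := hanti (Set.mem_Icc.2 ⟨ht, h.le⟩) (Set.mem_Icc.2 ⟨zero_le_one, le_rfl⟩) h.le
      rw [hf1] at this; exact this
  simp only [hf] at key
  linarith


noncomputable section
variable {S A : Type*} [Fintype S] [Fintype A]

lemma pmf_sum_toReal {X : Type*} [Fintype X] (p : PMF X) :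
    ∑ x : X, (p x).toReal = 1 := by
  have h := p.tsum_coe
  rw [tsum_fintype] at h
  have h2 := ENNReal.toReal_sum (s := (Finset.univ : Finset X)) (f := fun x => p x)
    (fun a _ => p.apply_ne_top a)
  rw [h] at h2
  simpa using h2.symm

lemma dDist_nonneg (P : S → A → PMF S) (pol : S → PMF A) (ρ0 : PMF S) :
    ∀ t p, 0 ≤ dDist P pol ρ0 t p
  | 0, p => mul_nonneg ENNReal.toReal_nonneg ENNReal.toReal_nonneg
  | (t+1), p => Finset.sum_nonneg fun q _ => mul_nonneg
      (mul_nonneg (dDist_nonneg P pol ρ0 t q) ENNReal.toReal_nonneg) ENNReal.toReal_nonneg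

lemma dDist_sum_one (P : S → A → PMF S) (pol : S → PMF A) (ρ0 : PMF S) :
    ∀ t, ∑ p : S × A, dDist P pol ρ0 t p = 1
  | 0 => by
    rw [Fintype.sum_prod_type]
    simp only [dDist]
    calc ∑ s : S, ∑ a : A, (ρ0 s).toReal * (pol s a).toReal
        = ∑ s : S, (ρ0 s).toReal * ∑ a : A, (pol s a).toReal := by
          simp [Finset.mul_sum]
      _ = 1 := by simp [pmf_sum_toReal]
  | (t+1) => by
    rw [Fintype.sum_prod_type]
    simp only [dDist]
    have h1 : ∀ s' : S, ∑ a' : A, ∑ p : S × A,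
        dDist P pol ρ0 t p * (P p.1 p.2 s').toReal * (pol s' a').toReal
        = ∑ p : S × A, dDist P pol ρ0 t p * (P p.1 p.2 s').toReal := by
      intro s'
      rw [Finset.sum_comm]
      refine Finset.sum_congr rfl fun p _ => ?_
      rw [← Finset.mul_sum, pmf_sum_toReal, mul_one]
    simp only [h1]
    rw [Finset.sum_comm]
    calc ∑ p : S × A, ∑ s' : S, dDist P pol ρ0 t p * (P p.1 p.2 s').toReal
        = ∑ p : S × A, dDist P pol ρ0 t p := by
          refine Finset.sum_congr rfl fun p _ => ?_
          rw [← Finset.mul_sum, pmf_sum_toReal, mul_one]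
      _ = 1 := dDist_sum_one P pol ρ0 t

lemma dDist_le_one (P : S → A → PMF S) (pol : S → PMF A) (ρ0 : PMF S) (t : ℕ) (p : S × A) :
    dDist P pol ρ0 t p ≤ 1 := by
  have h := dDist_sum_one P pol ρ0 t
  calc dDist P pol ρ0 t p ≤ ∑ q : S × A, dDist P pol ρ0 t q :=
        Finset.single_le_sum (fun q _ => dDist_nonneg P pol ρ0 t q) (Finset.mem_univ p)
    _ = 1 := h

/-- total variation-type distance between the two kernels at pair `p` -/
def tvd (Psrc Ptar : S → A → PMF S) (p : S × A) : ℝ :=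
  ∑ s' : S, |(Ptar p.1 p.2 s').toReal - (Psrc p.1 p.2 s').toReal|

lemma tvd_nonneg (Psrc Ptar : S → A → PMF S) (p : S × A) : 0 ≤ tvd Psrc Ptar p :=
  Finset.sum_nonneg fun _ _ => abs_nonneg _

lemma tvd_le_two (Psrc Ptar : S → A → PMF S) (p : S × A) : tvd Psrc Ptar p ≤ 2 := by
  unfold tvd
  calc ∑ s' : S, |(Ptar p.1 p.2 s').toReal - (Psrc p.1 p.2 s').toReal|
      ≤ ∑ s' : S, ((Ptar p.1 p.2 s').toReal + (Psrc p.1 p.2 s').toReal) := by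
        refine Finset.sum_le_sum fun s' _ => ?_
        have h1 : (0:ℝ) ≤ (Ptar p.1 p.2 s').toReal := ENNReal.toReal_nonneg
        have h2 : (0:ℝ) ≤ (Psrc p.1 p.2 s').toReal := ENNReal.toReal_nonneg
        rw [abs_sub_le_iff]; constructor <;> linarith
    _ = 2 := by rw [Finset.sum_add_distrib, pmf_sum_toReal, pmf_sum_toReal]; norm_num

section Delta
variable (Psrc Ptar : S → A → PMF S) (pol : S → PMF A) (ρ0 : PMF S)

/-- `ε t = Σ_p d_t^src(p)·tvd(p)` -/
def epsv (t : ℕ) : ℝ := ∑ p : S × A, dDist Psrc pol ρ0 t p * tvd Psrc Ptar p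

/-- `Δ t = Σ_p |d_t^tar(p) − d_t^src(p)|` -/
def Delt (t : ℕ) : ℝ :=
  ∑ p : S × A, |dDist Ptar pol ρ0 t p - dDist Psrc pol ρ0 t p|

lemma epsv_nonneg (t : ℕ) : 0 ≤ epsv Psrc Ptar pol ρ0 t :=
  Finset.sum_nonneg fun p _ => mul_nonneg (dDist_nonneg _ _ _ t p) (tvd_nonneg _ _ p)

lemma epsv_le_two (t : ℕ) : epsv Psrc Ptar pol ρ0 t ≤ 2 := by
  unfold epsv
  calc ∑ p : S × A, dDist Psrc pol ρ0 t p * tvd Psrc Ptar p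
      ≤ ∑ p : S × A, dDist Psrc pol ρ0 t p * 2 :=
        Finset.sum_le_sum fun p _ => mul_le_mul_of_nonneg_left (tvd_le_two _ _ p)
          (dDist_nonneg _ _ _ t p)
    _ = 2 := by rw [← Finset.sum_mul, dDist_sum_one]; norm_num

lemma Delt_zero : Delt Psrc Ptar pol ρ0 0 = 0 := by
  unfold Delt
  simp [dDist]

lemma Delt_nonneg (t : ℕ) : 0 ≤ Delt Psrc Ptar pol ρ0 t :=
  Finset.sum_nonneg fun p _ => abs_nonneg _

lemma Delt_le_two (t : ℕ) : Delt Psrc Ptar pol ρ0 t ≤ 2 := by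
  unfold Delt
  calc ∑ p : S × A, |dDist Ptar pol ρ0 t p - dDist Psrc pol ρ0 t p|
      ≤ ∑ p : S × A, (dDist Ptar pol ρ0 t p + dDist Psrc pol ρ0 t p) := by
        refine Finset.sum_le_sum fun p _ => ?_
        have h1 := dDist_nonneg Ptar pol ρ0 t p
        have h2 := dDist_nonneg Psrc pol ρ0 t p
        rw [abs_sub_le_iff]; constructor <;> linarith
    _ = 2 := by rw [Finset.sum_add_distrib, dDist_sum_one, dDist_sum_one]; norm_num

lemma Delt_succ_le (t : ℕ) :
    Delt Psrc Ptar pol ρ0 (t+1) ≤ Delt Psrc Ptar pol ρ0 t + epsv Psrc Ptar pol ρ0 t := by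
  classical
  set dT := dDist Ptar pol ρ0 with hdT
  set dS := dDist Psrc pol ρ0 with hdS
  -- pointwise bound
  have hpt : ∀ p' : S × A, |dT (t+1) p' - dS (t+1) p'|
      ≤ ∑ p : S × A, (|dT t p - dS t p| * (Ptar p.1 p.2 p'.1).toReal
          + dS t p * |(Ptar p.1 p.2 p'.1).toReal - (Psrc p.1 p.2 p'.1).toReal|)
          * (pol p'.1 p'.2).toReal := by
    intro p'
    show |dDist Ptar pol ρ0 (t+1) p' - dDist Psrc pol ρ0 (t+1) p'| ≤ _
    simp only [dDist]
    rw [← Finset.sum_sub_distrib]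
    calc |∑ p : S × A, (dT t p * (Ptar p.1 p.2 p'.1).toReal * (pol p'.1 p'.2).toReal
            - dS t p * (Psrc p.1 p.2 p'.1).toReal * (pol p'.1 p'.2).toReal)|
        ≤ ∑ p : S × A, |dT t p * (Ptar p.1 p.2 p'.1).toReal * (pol p'.1 p'.2).toReal
            - dS t p * (Psrc p.1 p.2 p'.1).toReal * (pol p'.1 p'.2).toReal| :=
          Finset.abs_sum_le_sum_abs _ _
      _ ≤ ∑ p : S × A, (|dT t p - dS t p| * (Ptar p.1 p.2 p'.1).toReal
            + dS t p * |(Ptar p.1 p.2 p'.1).toReal - (Psrc p.1 p.2 p'.1).toReal|)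
            * (pol p'.1 p'.2).toReal := by
          refine Finset.sum_le_sum fun p _ => ?_
          have hπ : (0:ℝ) ≤ (pol p'.1 p'.2).toReal := ENNReal.toReal_nonneg
          have hT : (0:ℝ) ≤ (Ptar p.1 p.2 p'.1).toReal := ENNReal.toReal_nonneg
          have hdSn : 0 ≤ dS t p := dDist_nonneg _ _ _ t p
          have key0 : |dT t p * (Ptar p.1 p.2 p'.1).toReal
              - dS t p * (Psrc p.1 p.2 p'.1).toReal|
              ≤ |dT t p - dS t p| * (Ptar p.1 p.2 p'.1).toReal
                + dS t p * |(Ptar p.1 p.2 p'.1).toReal - (Psrc p.1 p.2 p'.1).toReal| := by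
            have hre : dT t p * (Ptar p.1 p.2 p'.1).toReal
                - dS t p * (Psrc p.1 p.2 p'.1).toReal
                = (dT t p - dS t p) * (Ptar p.1 p.2 p'.1).toReal
                  + dS t p * ((Ptar p.1 p.2 p'.1).toReal - (Psrc p.1 p.2 p'.1).toReal) := by
              ring
            rw [hre]
            calc |(dT t p - dS t p) * (Ptar p.1 p.2 p'.1).toReal
                  + dS t p * ((Ptar p.1 p.2 p'.1).toReal - (Psrc p.1 p.2 p'.1).toReal)|
                ≤ |(dT t p - dS t p) * (Ptar p.1 p.2 p'.1).toReal|
                  + |dS t p * ((Ptar p.1 p.2 p'.1).toReal - (Psrc p.1 p.2 p'.1).toReal)| :=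
                  abs_add_le _ _
              _ = |dT t p - dS t p| * (Ptar p.1 p.2 p'.1).toReal
                  + dS t p * |(Ptar p.1 p.2 p'.1).toReal - (Psrc p.1 p.2 p'.1).toReal| := by
                  rw [abs_mul, abs_mul, abs_of_nonneg hT, abs_of_nonneg hdSn]
          calc |dT t p * (Ptar p.1 p.2 p'.1).toReal * (pol p'.1 p'.2).toReal
              - dS t p * (Psrc p.1 p.2 p'.1).toReal * (pol p'.1 p'.2).toReal|
              = |dT t p * (Ptar p.1 p.2 p'.1).toReal - dS t p * (Psrc p.1 p.2 p'.1).toReal|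
                * (pol p'.1 p'.2).toReal := by
                rw [← sub_mul, abs_mul, abs_of_nonneg hπ]
            _ ≤ _ := mul_le_mul_of_nonneg_right key0 hπ
  calc Delt Psrc Ptar pol ρ0 (t+1)
      ≤ ∑ p' : S × A, ∑ p : S × A, (|dT t p - dS t p| * (Ptar p.1 p.2 p'.1).toReal
          + dS t p * |(Ptar p.1 p.2 p'.1).toReal - (Psrc p.1 p.2 p'.1).toReal|)
          * (pol p'.1 p'.2).toReal := Finset.sum_le_sum fun p' _ => hpt p'
    _ = ∑ s' : S, ∑ p : S × A, (|dT t p - dS t p| * (Ptar p.1 p.2 s').toReal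
          + dS t p * |(Ptar p.1 p.2 s').toReal - (Psrc p.1 p.2 s').toReal|) := by
        rw [Fintype.sum_prod_type]
        refine Finset.sum_congr rfl fun s' _ => ?_
        rw [Finset.sum_comm]
        refine Finset.sum_congr rfl fun p _ => ?_
        simp only [Prod.fst, Prod.snd]
        rw [← Finset.mul_sum, pmf_sum_toReal, mul_one]
    _ = Delt Psrc Ptar pol ρ0 t + epsv Psrc Ptar pol ρ0 t := by
        rw [Finset.sum_comm]
        unfold Delt epsv tvd
        rw [← Finset.sum_add_distrib]
        refine Finset.sum_congr rfl fun p _ => ?_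
        rw [Finset.sum_add_distrib, ← Finset.mul_sum, ← Finset.mul_sum, pmf_sum_toReal,
          mul_one, hdT, hdS]

lemma Delt_le_sum (t : ℕ) :
    Delt Psrc Ptar pol ρ0 t ≤ ∑ k ∈ Finset.range t, epsv Psrc Ptar pol ρ0 k := by
  induction t with
  | zero => simp [Delt_zero]
  | succ t ih =>
    rw [Finset.sum_range_succ]
    have h := Delt_succ_le Psrc Ptar pol ρ0 t
    linarith

end Delta


section Main
variable (Psrc Ptar : S → A → PMF S) (pol : S → PMF A) (ρ0 : PMF S)
variable {γ : ℝ}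

lemma geom_tail_le (hγ0 : 0 ≤ γ) (hγ1 : γ < 1) (m T : ℕ) :
    ∑ t ∈ Finset.Ico m T, γ ^ t ≤ γ ^ m / (1 - γ) := by
  have h1γ : (0:ℝ) < 1 - γ := by linarith
  rcases le_or_gt T m with h | h
  · rw [Finset.Ico_eq_empty (by omega)]
    simp only [Finset.sum_empty]
    positivity
  · have hne : γ ≠ 1 := ne_of_lt hγ1
    rw [geom_sum_Ico hne h.le]
    have heq : (γ ^ T - γ ^ m) / (γ - 1) = (γ ^ m - γ ^ T) / (1 - γ) := by
      rw [div_eq_div_iff (by linarith) (by linarith)]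
      ring
    rw [heq, div_le_div_iff₀ h1γ h1γ]
    have : (0:ℝ) ≤ γ ^ T := pow_nonneg hγ0 T
    nlinarith

lemma summable_geps (hγ0 : 0 ≤ γ) (hγ1 : γ < 1) :
    Summable (fun k : ℕ => γ ^ k * epsv Psrc Ptar pol ρ0 k) := by
  apply Summable.of_nonneg_of_le
    (fun k => mul_nonneg (pow_nonneg hγ0 k) (epsv_nonneg Psrc Ptar pol ρ0 k))
    (fun k => mul_le_mul_of_nonneg_left (epsv_le_two Psrc Ptar pol ρ0 k) (pow_nonneg hγ0 k))
  exact (summable_geometric_of_lt_one hγ0 hγ1).mul_right 2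

lemma tsum_weighted (hγ0 : 0 ≤ γ) (hγ1 : γ < 1) :
    ∑' t : ℕ, γ ^ t * ∑ k ∈ Finset.range t, epsv Psrc Ptar pol ρ0 k
      ≤ (γ / (1 - γ)) * ∑' k : ℕ, γ ^ k * epsv Psrc Ptar pol ρ0 k := by
  have h1γ : (0:ℝ) < 1 - γ := by linarith
  set ε : ℕ → ℝ := epsv Psrc Ptar pol ρ0 with hε
  have hεnn : ∀ k, 0 ≤ ε k := epsv_nonneg Psrc Ptar pol ρ0
  have hsum : Summable (fun k : ℕ => γ ^ k * ε k) := summable_geps Psrc Ptar pol ρ0 hγ0 hγ1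
  apply Real.tsum_le_of_sum_range_le
  · intro t
    exact mul_nonneg (pow_nonneg hγ0 t) (Finset.sum_nonneg fun k _ => hεnn k)
  intro T
  calc ∑ t ∈ Finset.range T, γ ^ t * ∑ k ∈ Finset.range t, ε k
      = ∑ t ∈ Finset.range T, ∑ k ∈ Finset.range T, (if k < t then γ ^ t * ε k else 0) := by
        refine Finset.sum_congr rfl fun t ht => ?_
        rw [Finset.mul_sum, Finset.sum_ite, Finset.sum_const_zero, add_zero]
        apply Finset.sum_congr _ (fun k _ => rfl)
        ext k
        simp only [Finset.mem_range, Finset.mem_filter]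
        rw [Finset.mem_range] at ht
        omega
    _ = ∑ k ∈ Finset.range T, ∑ t ∈ Finset.range T, (if k < t then γ ^ t * ε k else 0) :=
        Finset.sum_comm
    _ = ∑ k ∈ Finset.range T, ε k * ∑ t ∈ Finset.Ico (k+1) T, γ ^ t := by
        refine Finset.sum_congr rfl fun k hk => ?_
        rw [Finset.mul_sum, Finset.sum_ite, Finset.sum_const_zero, add_zero]
        have hset : Finset.filter (fun x => k < x) (Finset.range T) = Finset.Ico (k+1) T := by
          ext t
          simp only [Finset.mem_filter, Finset.mem_range, Finset.mem_Ico]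
          omega
        rw [hset]
        exact Finset.sum_congr rfl fun t _ => mul_comm _ _
    _ ≤ ∑ k ∈ Finset.range T, ε k * (γ ^ (k+1) / (1 - γ)) :=
        Finset.sum_le_sum fun k _ => mul_le_mul_of_nonneg_left
          (geom_tail_le hγ0 hγ1 (k+1) T) (hεnn k)
    _ = (γ / (1 - γ)) * ∑ k ∈ Finset.range T, γ ^ k * ε k := by
        rw [Finset.mul_sum]
        refine Finset.sum_congr rfl fun k _ => ?_
        rw [pow_succ]
        field_simp
    _ ≤ (γ / (1 - γ)) * ∑' k : ℕ, γ ^ k * ε k := by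
        apply mul_le_mul_of_nonneg_left _ (by positivity)
        exact Summable.sum_le_tsum (Finset.range T) (fun k _ => mul_nonneg (pow_nonneg hγ0 k) (hεnn k))
          hsum

lemma occ_nonneg (P : S → A → PMF S) (hγ0 : 0 ≤ γ) (hγ1 : γ < 1) (p : S × A) :
    0 ≤ occ P pol ρ0 γ p := by
  unfold occ
  apply mul_nonneg (by linarith)
  exact tsum_nonneg fun t => mul_nonneg (pow_nonneg hγ0 t) (dDist_nonneg P pol ρ0 t p)

lemma occ_tvd_eq (hγ0 : 0 ≤ γ) (hγ1 : γ < 1) :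
    ∑ p : S × A, occ Psrc pol ρ0 γ p * tvd Psrc Ptar p
      = (1 - γ) * ∑' t : ℕ, γ ^ t * epsv Psrc Ptar pol ρ0 t := by
  have hsummand : ∀ p : S × A, Summable (fun t : ℕ => γ ^ t * dDist Psrc pol ρ0 t p * tvd Psrc Ptar p) := by
    intro p
    apply Summable.of_nonneg_of_le
      (fun t => mul_nonneg (mul_nonneg (pow_nonneg hγ0 t) (dDist_nonneg _ _ _ t p)) (tvd_nonneg _ _ p))
      (fun t => ?_) ((summable_geometric_of_lt_one hγ0 hγ1).mul_right 2)
    calc γ ^ t * dDist Psrc pol ρ0 t p * tvd Psrc Ptar p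
        ≤ γ ^ t * 1 * 2 := by
          apply mul_le_mul (mul_le_mul_of_nonneg_left (dDist_le_one _ _ _ t p) (pow_nonneg hγ0 t))
            (tvd_le_two _ _ p) (tvd_nonneg _ _ p)
          positivity
      _ = γ ^ t * 2 := by ring
  calc ∑ p : S × A, occ Psrc pol ρ0 γ p * tvd Psrc Ptar p
      = (1 - γ) * ∑ p : S × A, ∑' t : ℕ, γ ^ t * dDist Psrc pol ρ0 t p * tvd Psrc Ptar p := by
        rw [Finset.mul_sum]
        refine Finset.sum_congr rfl fun p _ => ?_
        unfold occ
        rw [mul_assoc, ← tsum_mul_right]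
    _ = (1 - γ) * ∑' t : ℕ, ∑ p : S × A, γ ^ t * dDist Psrc pol ρ0 t p * tvd Psrc Ptar p := by
        congr 1
        exact (Summable.tsum_finsetSum (fun p _ => hsummand p)).symm
    _ = (1 - γ) * ∑' t : ℕ, γ ^ t * epsv Psrc Ptar pol ρ0 t := by
        congr 1
        refine tsum_congr fun t => ?_
        unfold epsv
        rw [Finset.mul_sum]
        refine Finset.sum_congr rfl fun p _ => ?_
        ring

lemma sum_d_mul_r_abs_le (P : S → A → PMF S) (r : S → A → ℝ) (rmax : ℝ)
    (hr : ∀ s a, |r s a| ≤ rmax) (t : ℕ) :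
    |∑ p : S × A, dDist P pol ρ0 t p * r p.1 p.2| ≤ rmax := by
  calc |∑ p : S × A, dDist P pol ρ0 t p * r p.1 p.2|
      ≤ ∑ p : S × A, |dDist P pol ρ0 t p * r p.1 p.2| := Finset.abs_sum_le_sum_abs _ _
    _ ≤ ∑ p : S × A, dDist P pol ρ0 t p * rmax := by
        refine Finset.sum_le_sum fun p _ => ?_
        rw [abs_mul, abs_of_nonneg (dDist_nonneg _ _ _ t p)]
        exact mul_le_mul_of_nonneg_left (hr p.1 p.2) (dDist_nonneg _ _ _ t p)
    _ = rmax := by rw [← Finset.sum_mul, dDist_sum_one, one_mul]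

lemma jret_summable (P : S → A → PMF S) (r : S → A → ℝ) (rmax : ℝ) (hr : ∀ s a, |r s a| ≤ rmax)
    (hγ0 : 0 ≤ γ) (hγ1 : γ < 1) :
    Summable (fun t : ℕ => γ ^ t * ∑ p : S × A, dDist P pol ρ0 t p * r p.1 p.2) := by
  apply Summable.of_norm_bounded (g := fun t => rmax * γ ^ t)
    ((summable_geometric_of_lt_one hγ0 hγ1).mul_left rmax)
  intro t
  rw [Real.norm_eq_abs, abs_mul, abs_pow, abs_of_nonneg hγ0, mul_comm rmax]
  exact mul_le_mul_of_nonneg_left (sum_d_mul_r_abs_le pol ρ0 P r rmax hr t) (pow_nonneg hγ0 t)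

end Main
end

lemma pt_ineq (a b : ℝ) (ha : 0 ≤ a) (hb : 0 < b) :
    3*(a-b)^2/(2*(a+2*b)) ≤ a * Real.log (a/b) - a + b := by
  have h := key_ineq (t := a/b) (by positivity)
  have h2 := mul_le_mul_of_nonneg_left h hb.le
  have hb' : b ≠ 0 := hb.ne'
  have hab : a + 2*b ≠ 0 := by positivity
  calc 3*(a-b)^2/(2*(a+2*b)) = b * (3*(a/b-1)^2/(2*(a/b+2))) := by
        field_simp
    _ ≤ b * ((a/b) * Real.log (a/b) - a/b + 1) := h2
    _ = a * Real.log (a/b) - a + b := by field_simp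

lemma pinsker_fin {X : Type*} [Fintype X] (p q : PMF X) (hq : ∀ x, 0 < (q x).toReal) :
    (∑ x : X, |(p x).toReal - (q x).toReal|)^2 ≤ 2 * dKL p q := by
  set a : X → ℝ := fun x => (p x).toReal with ha
  set b : X → ℝ := fun x => (q x).toReal with hb
  have ha0 : ∀ x, 0 ≤ a x := fun x => ENNReal.toReal_nonneg
  set c : X → ℝ := fun x => 3*(a x - b x)^2/(2*(a x + 2 * b x)) with hc
  set w : X → ℝ := fun x => 2*(a x + 2 * b x)/3 with hw
  have hc0 : ∀ x, 0 ≤ c x := fun x => by have := hq x; positivity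
  have hw0 : ∀ x, 0 ≤ w x := fun x => by have := ha0 x; have := (hq x).le; positivity
  have hKLge : ∑ x : X, c x ≤ dKL p q := by
    have : dKL p q = ∑ x : X, (a x * Real.log (a x / b x) - a x + b x) := by
      unfold dKL
      rw [Finset.sum_add_distrib, Finset.sum_sub_distrib]
      rw [← ha, ← hb, pmf_sum_toReal, pmf_sum_toReal]
      ring
    rw [this]
    exact Finset.sum_le_sum (fun x _ => pt_ineq (a x) (b x) (ha0 x) (hq x))
  have hA : ∑ x : X, a x = 1 := pmf_sum_toReal p
  have hB : ∑ x : X, b x = 1 := pmf_sum_toReal q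
  have hsum_w : ∑ x : X, w x = 2 := by
    simp only [hw]
    rw [← Finset.sum_div]
    have h6 : ∑ x : X, 2*(a x + 2*b x) = 2*(∑ x : X, a x) + 4*(∑ x : X, b x) := by
      rw [Finset.mul_sum, Finset.mul_sum, ← Finset.sum_add_distrib]
      exact Finset.sum_congr rfl (fun x _ => by ring)
    rw [h6, hA, hB]; norm_num
  have hCS := Finset.sum_mul_sq_le_sq_mul_sq Finset.univ
    (fun x => Real.sqrt (c x)) (fun x => Real.sqrt (w x))
  have hterm : ∀ x : X, Real.sqrt (c x) * Real.sqrt (w x) = |a x - b x| := by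
    intro x
    rw [← Real.sqrt_mul (hc0 x)]
    have hx : a x + 2 * b x ≠ 0 := by have := ha0 x; have := hq x; positivity
    have : c x * w x = (a x - b x)^2 := by
      simp only [hc, hw]; field_simp
      exact mul_div_cancel_right₀ _ (by rw [mul_comm]; exact hx)
    rw [this, Real.sqrt_sq_eq_abs]
  rw [Finset.sum_congr rfl (fun x _ => (hterm x).symm)]
  calc (∑ x : X, Real.sqrt (c x) * Real.sqrt (w x))^2
      ≤ (∑ x : X, Real.sqrt (c x)^2) * ∑ x : X, Real.sqrt (w x)^2 := hCS
    _ = (∑ x : X, c x) * ∑ x : X, w x := by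
        congr 1
        · exact Finset.sum_congr rfl (fun x _ => Real.sq_sqrt (hc0 x))
        · exact Finset.sum_congr rfl (fun x _ => Real.sq_sqrt (hw0 x))
    _ = (∑ x : X, c x) * 2 := by rw [hsum_w]
    _ ≤ dKL p q * 2 := by nlinarith
    _ = 2 * dKL p q := by ring


section Assemble
variable {S A : Type*} [Fintype S] [Fintype A]
variable (Psrc Ptar : S → A → PMF S) (pol : S → PMF A) (ρ0 : PMF S) {γ : ℝ}

lemma jret_diff_abs_le (r : S → A → ℝ) (rmax : ℝ) (hrmax : 0 ≤ rmax)
    (hr : ∀ s a, |r s a| ≤ rmax) (hγ0 : 0 ≤ γ) (hγ1 : γ < 1) :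
    |Jret Ptar pol ρ0 r γ - Jret Psrc pol ρ0 r γ|
      ≤ γ * rmax / (1 - γ)^2 * ∑ p : S × A, occ Psrc pol ρ0 γ p * tvd Psrc Ptar p := by
  have h1γ : (0:ℝ) < 1 - γ := by linarith
  set uT : ℕ → ℝ := fun t => γ ^ t * ∑ p : S × A, dDist Ptar pol ρ0 t p * r p.1 p.2 with huT
  set uS : ℕ → ℝ := fun t => γ ^ t * ∑ p : S × A, dDist Psrc pol ρ0 t p * r p.1 p.2 with huS
  have hsT : Summable uT := jret_summable pol ρ0 Ptar r rmax hr hγ0 hγ1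
  have hsS : Summable uS := jret_summable pol ρ0 Psrc r rmax hr hγ0 hγ1
  have hdiff : Jret Ptar pol ρ0 r γ - Jret Psrc pol ρ0 r γ = ∑' t : ℕ, (uT t - uS t) :=
    (Summable.tsum_sub hsT hsS).symm
  have hεnn : ∀ k, 0 ≤ epsv Psrc Ptar pol ρ0 k := epsv_nonneg Psrc Ptar pol ρ0
  have hpt : ∀ t : ℕ, |uT t - uS t| ≤ rmax * (γ ^ t * Delt Psrc Ptar pol ρ0 t) := by
    intro t
    have heq : uT t - uS t = γ ^ t * ∑ p : S × A,
        (dDist Ptar pol ρ0 t p - dDist Psrc pol ρ0 t p) * r p.1 p.2 := by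
      simp only [huT, huS]
      rw [← mul_sub, ← Finset.sum_sub_distrib]
      congr 1
      refine Finset.sum_congr rfl fun p _ => ?_
      ring
    rw [heq, abs_mul, abs_pow, abs_of_nonneg hγ0]
    have h2 : |∑ p : S × A, (dDist Ptar pol ρ0 t p - dDist Psrc pol ρ0 t p) * r p.1 p.2|
        ≤ rmax * Delt Psrc Ptar pol ρ0 t := by
      calc |∑ p : S × A, (dDist Ptar pol ρ0 t p - dDist Psrc pol ρ0 t p) * r p.1 p.2|
          ≤ ∑ p : S × A, |(dDist Ptar pol ρ0 t p - dDist Psrc pol ρ0 t p) * r p.1 p.2| :=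
            Finset.abs_sum_le_sum_abs _ _
        _ ≤ ∑ p : S × A, |dDist Ptar pol ρ0 t p - dDist Psrc pol ρ0 t p| * rmax := by
            refine Finset.sum_le_sum fun p _ => ?_
            rw [abs_mul]
            exact mul_le_mul_of_nonneg_left (hr p.1 p.2) (abs_nonneg _)
        _ = rmax * Delt Psrc Ptar pol ρ0 t := by
            rw [← Finset.sum_mul]
            unfold Delt
            ring
    calc γ ^ t * |∑ p : S × A, (dDist Ptar pol ρ0 t p - dDist Psrc pol ρ0 t p) * r p.1 p.2|
        ≤ γ ^ t * (rmax * Delt Psrc Ptar pol ρ0 t) :=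
          mul_le_mul_of_nonneg_left h2 (pow_nonneg hγ0 t)
      _ = rmax * (γ ^ t * Delt Psrc Ptar pol ρ0 t) := by ring
  have hpt2 : ∀ t : ℕ, rmax * (γ ^ t * Delt Psrc Ptar pol ρ0 t)
      ≤ rmax * (γ ^ t * ∑ k ∈ Finset.range t, epsv Psrc Ptar pol ρ0 k) := fun t =>
    mul_le_mul_of_nonneg_left
      (mul_le_mul_of_nonneg_left (Delt_le_sum Psrc Ptar pol ρ0 t) (pow_nonneg hγ0 t)) hrmax
  have hsum3 : Summable (fun t : ℕ =>
      rmax * (γ ^ t * ∑ k ∈ Finset.range t, epsv Psrc Ptar pol ρ0 k)) := by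
    have hgeom : Summable (fun t : ℕ => (2 * rmax) * ((t:ℝ) ^ 1 * γ ^ t)) := by
      apply Summable.mul_left
      exact summable_pow_mul_geometric_of_norm_lt_one 1
        (by rwa [Real.norm_eq_abs, abs_of_nonneg hγ0])
    apply Summable.of_nonneg_of_le _ _ hgeom
    · intro t
      exact mul_nonneg hrmax (mul_nonneg (pow_nonneg hγ0 t)
        (Finset.sum_nonneg fun k _ => hεnn k))
    · intro t
      have hb : ∑ k ∈ Finset.range t, epsv Psrc Ptar pol ρ0 k ≤ 2 * t := by
        calc ∑ k ∈ Finset.range t, epsv Psrc Ptar pol ρ0 k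
            ≤ ∑ _k ∈ Finset.range t, (2:ℝ) :=
              Finset.sum_le_sum fun k _ => epsv_le_two Psrc Ptar pol ρ0 k
          _ = 2 * t := by simp [mul_comm]
      calc rmax * (γ ^ t * ∑ k ∈ Finset.range t, epsv Psrc Ptar pol ρ0 k)
          ≤ rmax * (γ ^ t * (2 * t)) := by
            apply mul_le_mul_of_nonneg_left _ hrmax
            exact mul_le_mul_of_nonneg_left hb (pow_nonneg hγ0 t)
        _ = (2 * rmax) * ((t:ℝ) ^ 1 * γ ^ t) := by ring
  have habs_sum : Summable (fun t : ℕ => |uT t - uS t|) :=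
    Summable.of_nonneg_of_le (fun t => abs_nonneg _)
      (fun t => (hpt t).trans (hpt2 t)) hsum3
  have hεeq := occ_tvd_eq Psrc Ptar pol ρ0 hγ0 hγ1
  calc |Jret Ptar pol ρ0 r γ - Jret Psrc pol ρ0 r γ|
      ≤ ∑' t : ℕ, |uT t - uS t| := by
        rw [hdiff]
        have hnorm := norm_tsum_le_tsum_norm (f := fun t : ℕ => uT t - uS t)
          (by simpa only [Real.norm_eq_abs] using habs_sum)
        simpa only [Real.norm_eq_abs] using hnorm
    _ ≤ ∑' t : ℕ, rmax * (γ ^ t * ∑ k ∈ Finset.range t, epsv Psrc Ptar pol ρ0 k) :=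
        Summable.tsum_le_tsum (fun t => (hpt t).trans (hpt2 t)) habs_sum hsum3
    _ = rmax * ∑' t : ℕ, (γ ^ t * ∑ k ∈ Finset.range t, epsv Psrc Ptar pol ρ0 k) :=
        tsum_mul_left
    _ ≤ rmax * ((γ / (1 - γ)) * ∑' k : ℕ, γ ^ k * epsv Psrc Ptar pol ρ0 k) := by
        apply mul_le_mul_of_nonneg_left _ hrmax
        exact tsum_weighted Psrc Ptar pol ρ0 hγ0 hγ1
    _ = γ * rmax / (1 - γ)^2 * ∑ p : S × A, occ Psrc pol ρ0 γ p * tvd Psrc Ptar p := by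
        rw [hεeq]
        field_simp

lemma sqrt_add_le' {x y : ℝ} (hx : 0 ≤ x) (hy : 0 ≤ y) :
    Real.sqrt (x + y) ≤ Real.sqrt x + Real.sqrt y := by
  have h : x + y ≤ (Real.sqrt x + Real.sqrt y)^2 := by
    nlinarith [Real.sq_sqrt hx, Real.sq_sqrt hy, Real.sqrt_nonneg x, Real.sqrt_nonneg y,
      mul_nonneg (Real.sqrt_nonneg x) (Real.sqrt_nonneg y)]
  calc Real.sqrt (x + y) ≤ Real.sqrt ((Real.sqrt x + Real.sqrt y)^2) := Real.sqrt_le_sqrt h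
    _ = Real.sqrt x + Real.sqrt y := Real.sqrt_sq (by positivity)

end Assemble

/-- online performance bound with representation mismatch and entropy
gap, Theorem 3: given a nonnegative per-pair representation mismatch
`R(s,a) = D_KL(P_src(s,a)‖P_tar(s,a)) + H(P_src(s,a)) − H(P_tar(s,a))`, for any policy `pol`,
`J[P_tar](pol) − J[P_src](pol) ≥ −(√2·γ·r_max/(1−γ)²) Σ ρ[P_src,pol]·√R
 − (√2·γ·r_max/(1−γ)²) Σ ρ[P_src,pol]·√|H(P_src) − H(P_tar)|`. -/
theorem online_performance_bound_representation
    {S A : Type*} [Fintype S] [Fintype A] [Nonempty S] [Nonempty A]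
    (Psrc Ptar : S → A → PMF S) (hpos : ∀ s a s', 0 < Ptar s a s')
    (R : S × A → ℝ) (hR0 : ∀ p : S × A, 0 ≤ R p)
    (hR : ∀ p : S × A, R p = dKL (Psrc p.1 p.2) (Ptar p.1 p.2)
      + entropyPMF (Psrc p.1 p.2) - entropyPMF (Ptar p.1 p.2))
    (pol : S → PMF A) (ρ0 : PMF S)
    (r : S → A → ℝ) (rmax : ℝ) (hrmax : 0 ≤ rmax) (hr : ∀ s a, |r s a| ≤ rmax)
    (γ : ℝ) (hγ0 : 0 ≤ γ) (hγ1 : γ < 1) :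
    Jret Ptar pol ρ0 r γ - Jret Psrc pol ρ0 r γ ≥
      -(Real.sqrt 2 * γ * rmax / (1 - γ) ^ 2) *
        (∑ p : S × A, occ Psrc pol ρ0 γ p * Real.sqrt (R p))
      - (Real.sqrt 2 * γ * rmax / (1 - γ) ^ 2) *
        ∑ p : S × A, occ Psrc pol ρ0 γ p *
          Real.sqrt |entropyPMF (Psrc p.1 p.2) - entropyPMF (Ptar p.1 p.2)| := by
  have h1γ : (0:ℝ) < 1 - γ := by linarith
  set c : ℝ := γ * rmax / (1 - γ)^2 with hc
  have hc0 : 0 ≤ c := by positivity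
  have hJ := jret_diff_abs_le Psrc Ptar pol ρ0 r rmax hrmax hr hγ0 hγ1
  have htvd : ∀ p : S × A, tvd Psrc Ptar p ≤ Real.sqrt 2 * (Real.sqrt (R p)
      + Real.sqrt |entropyPMF (Psrc p.1 p.2) - entropyPMF (Ptar p.1 p.2)|) := by
    intro p
    have hq : ∀ x, 0 < (Ptar p.1 p.2 x).toReal := fun x =>
      ENNReal.toReal_pos (hpos p.1 p.2 x).ne' (PMF.apply_ne_top _ x)
    have hpin := pinsker_fin (Psrc p.1 p.2) (Ptar p.1 p.2) hq
    have htv_eq : tvd Psrc Ptar p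
        = ∑ x : S, |(Psrc p.1 p.2 x).toReal - (Ptar p.1 p.2 x).toReal| :=
      Finset.sum_congr rfl fun x _ => abs_sub_comm _ _
    have hKLle : dKL (Psrc p.1 p.2) (Ptar p.1 p.2)
        ≤ R p + |entropyPMF (Psrc p.1 p.2) - entropyPMF (Ptar p.1 p.2)| := by
      have h1 := hR p
      have h2 := neg_abs_le (entropyPMF (Psrc p.1 p.2) - entropyPMF (Ptar p.1 p.2))
      linarith
    have htvnn := tvd_nonneg Psrc Ptar p
    have h2 : (tvd Psrc Ptar p)^2
        ≤ 2 * (R p + |entropyPMF (Psrc p.1 p.2) - entropyPMF (Ptar p.1 p.2)|) := by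
      rw [htv_eq]
      nlinarith [hpin, hKLle]
    calc tvd Psrc Ptar p = Real.sqrt ((tvd Psrc Ptar p)^2) := (Real.sqrt_sq htvnn).symm
      _ ≤ Real.sqrt (2 * (R p + |entropyPMF (Psrc p.1 p.2) - entropyPMF (Ptar p.1 p.2)|)) :=
          Real.sqrt_le_sqrt h2
      _ = Real.sqrt 2 * Real.sqrt (R p
            + |entropyPMF (Psrc p.1 p.2) - entropyPMF (Ptar p.1 p.2)|) :=
          Real.sqrt_mul (by norm_num) _
      _ ≤ Real.sqrt 2 * (Real.sqrt (R p)
            + Real.sqrt |entropyPMF (Psrc p.1 p.2) - entropyPMF (Ptar p.1 p.2)|) :=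
          mul_le_mul_of_nonneg_left (sqrt_add_le' (hR0 p) (abs_nonneg _)) (Real.sqrt_nonneg 2)
  have hsum : ∑ p : S × A, occ Psrc pol ρ0 γ p * tvd Psrc Ptar p
      ≤ Real.sqrt 2 * ((∑ p : S × A, occ Psrc pol ρ0 γ p * Real.sqrt (R p))
        + ∑ p : S × A, occ Psrc pol ρ0 γ p
          * Real.sqrt |entropyPMF (Psrc p.1 p.2) - entropyPMF (Ptar p.1 p.2)|) := by
    calc ∑ p : S × A, occ Psrc pol ρ0 γ p * tvd Psrc Ptar p
        ≤ ∑ p : S × A, occ Psrc pol ρ0 γ p * (Real.sqrt 2 * (Real.sqrt (R p)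
            + Real.sqrt |entropyPMF (Psrc p.1 p.2) - entropyPMF (Ptar p.1 p.2)|)) :=
          Finset.sum_le_sum fun p _ => mul_le_mul_of_nonneg_left (htvd p)
            (occ_nonneg pol ρ0 Psrc hγ0 hγ1 p)
      _ = Real.sqrt 2 * ((∑ p : S × A, occ Psrc pol ρ0 γ p * Real.sqrt (R p))
            + ∑ p : S × A, occ Psrc pol ρ0 γ p
              * Real.sqrt |entropyPMF (Psrc p.1 p.2) - entropyPMF (Ptar p.1 p.2)|) := by
          rw [Finset.sum_congr rfl (fun p _ => show occ Psrc pol ρ0 γ p * (Real.sqrt 2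
              * (Real.sqrt (R p)
              + Real.sqrt |entropyPMF (Psrc p.1 p.2) - entropyPMF (Ptar p.1 p.2)|))
            = Real.sqrt 2 * (occ Psrc pol ρ0 γ p * Real.sqrt (R p))
              + Real.sqrt 2 * (occ Psrc pol ρ0 γ p
                * Real.sqrt |entropyPMF (Psrc p.1 p.2) - entropyPMF (Ptar p.1 p.2)|)
            from by ring), Finset.sum_add_distrib, ← Finset.mul_sum, ← Finset.mul_sum,
            ← mul_add]
  have hneg : Jret Ptar pol ρ0 r γ - Jret Psrc pol ρ0 r γ
      ≥ -(c * ∑ p : S × A, occ Psrc pol ρ0 γ p * tvd Psrc Ptar p) := by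
    have h := neg_abs_le (Jret Ptar pol ρ0 r γ - Jret Psrc pol ρ0 r γ)
    have h2 : c * ∑ p : S × A, occ Psrc pol ρ0 γ p * tvd Psrc Ptar p
        = γ * rmax / (1 - γ)^2 * ∑ p : S × A, occ Psrc pol ρ0 γ p * tvd Psrc Ptar p := by
      rw [hc]
    linarith
  calc Jret Ptar pol ρ0 r γ - Jret Psrc pol ρ0 r γ
      ≥ -(c * ∑ p : S × A, occ Psrc pol ρ0 γ p * tvd Psrc Ptar p) := hneg
    _ ≥ -(c * (Real.sqrt 2 * ((∑ p : S × A, occ Psrc pol ρ0 γ p * Real.sqrt (R p))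
          + ∑ p : S × A, occ Psrc pol ρ0 γ p
            * Real.sqrt |entropyPMF (Psrc p.1 p.2) - entropyPMF (Ptar p.1 p.2)|))) := by
        apply neg_le_neg
        exact mul_le_mul_of_nonneg_left hsum hc0
    _ = -(Real.sqrt 2 * γ * rmax / (1 - γ) ^ 2) *
          (∑ p : S × A, occ Psrc pol ρ0 γ p * Real.sqrt (R p))
        - (Real.sqrt 2 * γ * rmax / (1 - γ) ^ 2) *
          ∑ p : S × A, occ Psrc pol ρ0 γ p *
            Real.sqrt |entropyPMF (Psrc p.1 p.2) - entropyPMF (Ptar p.1 p.2)| := by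
        rw [hc]
        ring
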